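/- For max-plus matrices, A ⊗ X ⊗ B ≤ C if and only if X ≤ A♯ ⊗' C ⊗' B♯ (entrywise order), where ♯ is the conjugate and ⊗' is min-plus matrix multiplication. -/

import Mathlib

/-- Min-plus addition on `EReal`: agrees with `+` on finite values, with `⊤` absorbing. -/
noncomputable def mpAdd (a b : EReal) : EReal := -((-a) + (-b))

/-- Max-plus matrix multiplication. -/
noncomputable def maxMul {α β γ : Type*} [Fintype β]
    (A : Matrix α β EReal) (B : Matrix β γ EReal) : Matrix α γ EReal :=
  fun i j => ⨆ k, A i k + B k j

/-- Min-plus matrix multiplication. -/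
noncomputable def minMul {α β γ : Type*} [Fintype β]
    (A : Matrix α β EReal) (B : Matrix β γ EReal) : Matrix α γ EReal :=
  fun i j => ⨅ k, mpAdd (A i k) (B k j)

/-- Max-plus matrix-vector multiplication. -/
noncomputable def maxMulVec {α β : Type*} [Fintype β]
    (A : Matrix α β EReal) (x : β → EReal) : α → EReal :=
  fun i => ⨆ j, A i j + x j

/-- Min-plus matrix-vector multiplication. -/
noncomputable def minMulVec {α β : Type*} [Fintype β]
    (A : Matrix α β EReal) (x : β → EReal) : α → EReal :=
  fun i => ⨅ j, mpAdd (A i j) (x j)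

/-- Conjugate `A♯ = -Aᵀ` (sending `-∞` to `+∞` and vice versa). -/
noncomputable def conj {α β : Type*} (A : Matrix α β EReal) : Matrix β α EReal :=
  fun j i => -(A i j)

/-- Max-plus Kronecker product: block `(i,k),(j,l)` entry is `A i j + B k l`. -/
noncomputable def kron {α β γ δ : Type*} (A : Matrix α β EReal) (B : Matrix γ δ EReal) :
    Matrix (α × γ) (β × δ) EReal :=
  fun ik jl => A ik.1 jl.1 + B ik.2 jl.2

/-- Min-plus Kronecker product. -/
noncomputable def minKron {α β γ δ : Type*} (A : Matrix α β EReal) (B : Matrix γ δ EReal) :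
    Matrix (α × γ) (β × δ) EReal :=
  fun ik jl => mpAdd (A ik.1 jl.1) (B ik.2 jl.2)

/-- Column-stacking vectorization: `vec X (j, i) = X i j`. -/
def vec {α β : Type*} (X : Matrix α β EReal) : β × α → EReal := fun p => X p.2 p.1

/-- Entries lie in `ℝ ∪ {-∞}`, i.e. no `+∞` entries. -/
def RMaxEntries {α β : Type*} (A : Matrix α β EReal) : Prop := ∀ i j, A i j ≠ ⊤

/-- Doubly ℝ-astic: entries in `ℝ ∪ {-∞}`, with a finite entry in each row and column. -/
def DoublyRAstic {α β : Type*} (A : Matrix α β EReal) : Prop :=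
  (∀ i j, A i j ≠ ⊤) ∧ (∀ i, ∃ j, A i j ≠ ⊥) ∧ (∀ j, ∃ i, A i j ≠ ⊥)

/-- All entries of the matrix are finite reals. -/
def FiniteEntries {α β : Type*} (C : Matrix α β EReal) : Prop :=
  ∀ i j, ∃ r : ℝ, C i j = (r : EReal)

/-- All entries of the vector are finite reals. -/
def FiniteVec {α : Type*} (b : α → EReal) : Prop := ∀ i, ∃ r : ℝ, b i = (r : EReal)

/-! On `EReal` the (`⊥`-absorbing) addition `a + ·` has the min-plus translate `mpAdd (-a) ·` as
upper adjoint, with no finiteness condition on `a`. Entrywise, a max-plus product `A ⊗ Y` is a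
supremum of such translates, so `A ⊗ Y ≤ C` holds iff `Y ≤ A♯ ⊗' C`, and symmetrically
`X ⊗ B ≤ C` iff `X ≤ C ⊗' B♯`. Applying both to `(A ⊗ X) ⊗ B = A ⊗ (X ⊗ B)` gives the theorem. -/

theorem add_le_iff_le_mpAdd_neg (a x c : EReal) : a + x ≤ c ↔ x ≤ mpAdd (-a) c := by
  rw [mpAdd, neg_neg]
  induction a <;> induction c <;> induction x <;> try simp
  norm_cast
  constructor <;> intro <;> linarith

theorem gc_add_mpAdd_neg (a : EReal) : GaloisConnection (a + ·) (mpAdd (-a)) :=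
  fun _ _ => add_le_iff_le_mpAdd_neg a _ _

theorem mpAdd_comm (a b : EReal) : mpAdd a b = mpAdd b a := by
  rw [mpAdd, mpAdd, add_comm]

theorem EReal.add_iSup {ι : Type*} (a : EReal) (f : ι → EReal) :
    a + ⨆ i, f i = ⨆ i, a + f i :=
  (gc_add_mpAdd_neg a).l_iSup

theorem EReal.iSup_add {ι : Type*} (f : ι → EReal) (b : EReal) :
    (⨆ i, f i) + b = ⨆ i, f i + b := by
  simp only [add_comm _ b, EReal.add_iSup]

theorem maxMul_assoc {α β γ δ : Type*} [Fintype β] [Fintype γ] (A : Matrix α β EReal)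
    (B : Matrix β γ EReal) (C : Matrix γ δ EReal) :
    maxMul A (maxMul B C) = maxMul (maxMul A B) C := by
  ext i j
  simp only [maxMul, EReal.add_iSup, EReal.iSup_add, add_assoc]
  exact iSup_comm

theorem maxMul_le_iff_le_conj_minMul {α β γ : Type*} [Fintype α] [Fintype β]
    (A : Matrix α β EReal) (Y : Matrix β γ EReal) (C : Matrix α γ EReal) :
    (∀ i j, maxMul A Y i j ≤ C i j) ↔ ∀ k j, Y k j ≤ minMul (conj A) C k j := by
  simp only [maxMul, minMul, conj, iSup_le_iff, le_iInf_iff, add_le_iff_le_mpAdd_neg]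
  exact ⟨fun h k j i => h i j k, fun h i j k => h k j i⟩

theorem maxMul_le_iff_le_minMul_conj {α β γ : Type*} [Fintype β] [Fintype γ]
    (X : Matrix α β EReal) (B : Matrix β γ EReal) (C : Matrix α γ EReal) :
    (∀ i j, maxMul X B i j ≤ C i j) ↔ ∀ i l, X i l ≤ minMul C (conj B) i l := by
  simp only [maxMul, minMul, conj, iSup_le_iff, le_iInf_iff, add_comm (X _ _),
    add_le_iff_le_mpAdd_neg, mpAdd_comm (-B _ _)]
  exact ⟨fun h i l j => h i j l, fun h i j l => h i l j⟩

theorem stmt7_general {m n : ℕ} (A : Matrix (Fin m) (Fin m) EReal) (B : Matrix (Fin n) (Fin n) EReal)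
    (C X : Matrix (Fin m) (Fin n) EReal) :
    (∀ i j, maxMul A (maxMul X B) i j ≤ C i j) ↔
      (∀ i j, X i j ≤ minMul (conj A) (minMul C (conj B)) i j) := by
  rw [maxMul_assoc, maxMul_le_iff_le_minMul_conj, maxMul_le_iff_le_conj_minMul]

theorem stmt7 {m n : ℕ} (A : Matrix (Fin m) (Fin m) EReal) (B : Matrix (Fin n) (Fin n) EReal)
    (C X : Matrix (Fin m) (Fin n) EReal)
    (hA : DoublyRAstic A) (hB : DoublyRAstic B) (hC : FiniteEntries C) (hX : RMaxEntries X) :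
    (∀ i j, maxMul A (maxMul X B) i j ≤ C i j) ↔
      (∀ i j, X i j ≤ minMul (conj A) (minMul C (conj B)) i j) :=
  stmt7_general A B C X
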